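/- arXiv:2302.13342 — 4 statements merged into one kernel-verified Lean document; each statement's English description precedes it below -/
import Mathlib

section
/- When all agents' valuations are binary and linear, for every symmetric strictly convex function Φ : ℝ^N → ℝ there exists a Φ-fair allocation of the mixed goods (and one can choose it to satisfy condition (*)). -/
open MeasureTheory

/-- The interval `I_j = [j/ℓ, (j+1)/ℓ) ⊆ [0,1)` representing the `j`-th of the
`ℓ` divisible goods (so that `I_1, …, I_ℓ` partition the cake `C = [0,1)`). -/
def dgInterval (l : ℕ) (j : Fin l) : Set ℝ :=
  Set.Ico ((j : ℝ) / l) (((j : ℝ) + 1) / l)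

/-- An allocation of `m` indivisible goods and of the cake `[0,1)` among `n` agents:
the indivisible goods are partitioned into the bundles `ind i`, and the cake `[0,1)`
is partitioned into the measurable (Borel) pieces `piece i`. -/
structure Alloc (n m : ℕ) where
  ind : Fin n → Finset (Fin m)
  piece : Fin n → Set ℝ
  ind_partition : ∀ g : Fin m, ∃! i : Fin n, g ∈ ind i
  piece_measurable : ∀ i, MeasurableSet (piece i)
  piece_disjoint : ∀ i j : Fin n, i ≠ j → piece i ∩ piece j = ∅
  piece_cover : (⋃ i, piece i) = Set.Ico (0 : ℝ) 1

section

variable {n m l : ℕ} (vM : Fin n → Fin m → ℝ) (vC : Fin n → Fin l → ℝ)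

/-- Additive value of agent `i` for a set `S` of indivisible goods. -/
def valInd (i : Fin n) (S : Finset (Fin m)) : ℝ := ∑ g ∈ S, vM i g

/-- Linear value of agent `i` for a piece `S` of the cake:
`u_i(S) = ∑_j u_i(c_j) · μ(S ∩ I_j)` where `μ` is the Lebesgue measure. -/
noncomputable def valDiv (i : Fin n) (S : Set ℝ) : ℝ :=
  ∑ j : Fin l, vC i j * (volume (S ∩ dgInterval l j)).toReal

/-- Value of agent `i` for agent `j`'s bundle `A_j = M_j ∪ C_j` in allocation `A`. -/
noncomputable def valOn (A : Alloc n m) (i j : Fin n) : ℝ :=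
  valInd vM i (A.ind j) + valDiv vC i (A.piece j)

/-- Utility of agent `i` in allocation `A`: `u_i(A_i) = u_i(M_i) + u_i(C_i)`. -/
noncomputable def util (A : Alloc n m) (i : Fin n) : ℝ := valOn vM vC A i i

/-- An allocation is utilitarian optimal if it maximizes the total sum of utilities. -/
def UtilOpt (A : Alloc n m) : Prop :=
  ∀ A' : Alloc n m, (∑ i, util vM vC A' i) ≤ ∑ i, util vM vC A i

/-- An allocation is `Φ`-fair if its utility vector minimizes `Φ` among the utility
vectors of utilitarian optimal allocations. -/
def PhiFair (Φ : (Fin n → ℝ) → ℝ) (A : Alloc n m) : Prop :=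
  UtilOpt vM vC A ∧
    ∀ A' : Alloc n m, UtilOpt vM vC A' → Φ (util vM vC A) ≤ Φ (util vM vC A')

/-- Pareto optimality: no allocation gives every agent at least as much utility
and some agent strictly more. -/
def PO (A : Alloc n m) : Prop :=
  ¬ ∃ A' : Alloc n m,
      (∀ i, util vM vC A i ≤ util vM vC A' i) ∧ ∃ i, util vM vC A i < util vM vC A' i

/-- Envy-freeness up to any good for mixed goods (EFXM): for all agents `i, j`,
if `C_j = ∅` then `u_i(A_i) ≥ u_i(A_j)` or `u_i(A_i) ≥ u_i(A_j \ {g})` for every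
indivisible good `g ∈ A_j`; otherwise `u_i(A_i) ≥ u_i(A_j)`. -/
def EFXM (A : Alloc n m) : Prop :=
  ∀ i j : Fin n,
    (A.piece j = ∅ →
      (valOn vM vC A i j ≤ util vM vC A i ∨
        ∀ g ∈ A.ind j,
          valInd vM i (A.ind j \ {g}) + valDiv vC i (A.piece j) ≤ util vM vC A i)) ∧
    (A.piece j ≠ ∅ → valOn vM vC A i j ≤ util vM vC A i)

end

/-- Condition (*): each agent's piece of each divisible good is either empty or of
positive Lebesgue measure. -/
def CondStar {n m : ℕ} (l : ℕ) (A : Alloc n m) : Prop :=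
  ∀ (i : Fin n) (j : Fin l),
    A.piece i ∩ dgInterval l j = ∅ ∨ 0 < volume (A.piece i ∩ dgInterval l j)

/-! Up to utilities, an allocation is an assignment of the indivisible goods together with a
matrix of shares of the divisible goods; these matrices form a compact polytope on which utilities
depend continuously, so the utility vectors of all allocations form a compact set. Maximise the
utilitarian welfare on it, then minimise `Φ`, convex and hence continuous, on the compact set of
maximisers. The minimiser is realised by cutting each `I_j` into consecutive intervals whose
lengths are the shares; an interval is empty or has positive length, which gives condition (*). -/

open Set Function

theorem Monotone.iUnion_fin_Ico_succ {β : Type*} [LinearOrder β] {S : ℕ → β} (hS : Monotone S)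
    (k : ℕ) : ⋃ i : Fin k, Ico (S i) (S (i + 1)) = Ico (S 0) (S k) := by
  induction k with
  | zero => simp
  | succ k ih =>
    rw [← Ico_union_Ico_eq_Ico (hS k.zero_le) (hS k.le_succ), ← ih]
    ext y
    simp [Fin.exists_fin_succ']

theorem Monotone.pairwise_disjoint_on_fin_Ico_succ {β : Type*} [Preorder β] {S : ℕ → β}
    (hS : Monotone S) (k : ℕ) : Pairwise (Disjoint on fun i : Fin k => Ico (S i) (S (i + 1))) :=
  hS.pairwise_disjoint_on_Ico_succ.comp_of_injective Fin.val_injective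

theorem Real.Ico_eq_empty_or_volume_pos (a b : ℝ) : Ico a b = ∅ ∨ 0 < volume (Ico a b) := by
  rcases lt_or_ge a b with hab | hba
  · exact Or.inr (by simpa using hab)
  · exact Or.inl (Ico_eq_empty_of_le hba)

theorem IsCompact.exists_isMaxOn_isMinOn_maximizers {α : Type*} [TopologicalSpace α]
    {K : Set α} (hK : IsCompact K) (hne : K.Nonempty) {g Φ : α → ℝ} (hg : Continuous g)
    (hΦ : ContinuousOn Φ K) : ∃ u ∈ K, IsMaxOn g K u ∧ IsMinOn Φ {v ∈ K | IsMaxOn g K v} u := by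
  obtain ⟨w, hwK, hw⟩ := hK.exists_isMaxOn hne hg.continuousOn
  have hmaximizers : {v ∈ K | IsMaxOn g K v} = K ∩ g ⁻¹' {g w} := by
    ext v
    refine ⟨fun ⟨hvK, hv⟩ => ⟨hvK, le_antisymm (hw hvK) (hv hwK)⟩, fun ⟨hvK, hv⟩ => ⟨hvK, ?_⟩⟩
    exact fun y hy => (hw hy).trans_eq (Eq.symm hv)
  rw [hmaximizers]
  obtain ⟨u, ⟨huK, hu⟩, hmin⟩ := (hK.inter_right (isClosed_singleton.preimage hg)).exists_isMinOn
    ⟨w, hwK, rfl⟩ (hΦ.mono inter_subset_left)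
  exact ⟨u, huK, fun y hy => (hw hy).trans_eq (Eq.symm hu), hmin⟩

theorem strictConvexOn_univ_of_lt {ι : Type*} {Φ : (ι → ℝ) → ℝ}
    (h : ∀ z w : ι → ℝ, z ≠ w → ∀ t : ℝ, 0 < t → t < 1 →
      Φ (fun i => t * z i + (1 - t) * w i) < t * Φ z + (1 - t) * Φ w) :
    StrictConvexOn ℝ univ Φ := by
  refine ⟨convex_univ, fun z _ w _ hzw a b ha hb hab => ?_⟩
  obtain rfl : b = 1 - a := by linarith
  exact h z w hzw a ha (by linarith)

section dgInterval

variable {l : ℕ}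

theorem dgInterval_eq_Ico_succ (j : Fin l) :
    dgInterval l j = Ico (((j : ℕ) : ℝ) / l) ((((j : ℕ) + 1 : ℕ) : ℝ) / l) := by
  simp [dgInterval]

theorem monotone_natCast_div (l : ℕ) : Monotone fun k : ℕ => (k : ℝ) / l :=
  fun _ _ h => div_le_div_of_nonneg_right (Nat.cast_le.2 h) (Nat.cast_nonneg l)

theorem pairwise_disjoint_dgInterval : Pairwise (Disjoint on dgInterval l) := by
  rw [funext dgInterval_eq_Ico_succ]
  exact (monotone_natCast_div l).pairwise_disjoint_on_fin_Ico_succ l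

theorem iUnion_dgInterval (hl : 0 < l) : ⋃ j, dgInterval l j = Ico 0 1 := by
  rw [funext dgInterval_eq_Ico_succ, (monotone_natCast_div l).iUnion_fin_Ico_succ l]
  simp [hl.ne']

theorem dgInterval_subset_Ico (j : Fin l) : dgInterval l j ⊆ Ico 0 1 :=
  iUnion_dgInterval j.pos ▸ subset_iUnion (dgInterval l) j

theorem volume_real_dgInterval (j : Fin l) : volume.real (dgInterval l j) = 1 / l := by
  rw [dgInterval, Real.volume_real_Ico_of_le (by gcongr; linarith)]
  ring

end dgInterval

section allocations

variable {n m l : ℕ}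

/-- Matrices `x` with `x i j` the length of the divisible good `j` that agent `i` receives. -/
def shareMatrices (n l : ℕ) : Set (Fin n → Fin l → ℝ) :=
  {x | (∀ i j, 0 ≤ x i j) ∧ ∀ j, ∑ i, x i j = 1 / l}

theorem shareMatrices_nonempty (hn : 0 < n) : (shareMatrices n l).Nonempty := by
  refine ⟨fun _ _ => 1 / (n * l), fun _ _ => by positivity, fun _ => ?_⟩
  rw [Finset.sum_const, Finset.card_univ, Fintype.card_fin, nsmul_eq_mul]
  field_simp

theorem isCompact_shareMatrices : IsCompact (shareMatrices n l) := by
  have hclosed : IsClosed (shareMatrices n l) := by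
    simp only [shareMatrices, ofPred_and, ofPred_forall]
    exact (isClosed_iInter fun i => isClosed_iInter fun j =>
      isClosed_le continuous_const (by fun_prop)).inter
      (isClosed_iInter fun j => isClosed_eq (by fun_prop) continuous_const)
  refine (isCompact_univ_pi fun _ => isCompact_univ_pi fun _ =>
    isCompact_Icc (a := (0 : ℝ)) (b := 1 / l)).of_isClosed_subset hclosed ?_
  rintro x ⟨hx0, hxsum⟩
  refine mem_univ_pi.2 fun i => mem_univ_pi.2 fun j => ⟨hx0 i j, ?_⟩
  exact hxsum j ▸ Finset.single_le_sum (fun i' _ => hx0 i' j) (Finset.mem_univ i)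

section utilSet

variable (vM : Fin n → Fin m → ℝ) (vC : Fin n → Fin l → ℝ)

def utilVec (f : Fin m → Fin n) (x : Fin n → Fin l → ℝ) : Fin n → ℝ :=
  fun i => valInd vM i (Finset.univ.filter (f · = i)) + ∑ j, vC i j * x i j

def utilSet : Set (Fin n → ℝ) :=
  ⋃ f : Fin m → Fin n, utilVec vM vC f '' shareMatrices n l

theorem isCompact_utilSet : IsCompact (utilSet vM vC) :=
  isCompact_iUnion fun f => isCompact_shareMatrices.image (by unfold utilVec; fun_prop)

theorem utilSet_nonempty (hn : 0 < n) : (utilSet vM vC).Nonempty :=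
  let ⟨_, hx⟩ := shareMatrices_nonempty hn
  ⟨_, mem_iUnion.2 ⟨fun _ => ⟨0, hn⟩, mem_image_of_mem _ hx⟩⟩

end utilSet

namespace Alloc

section decompose

variable (A : Alloc n m)

noncomputable def owner (g : Fin m) : Fin n := (A.ind_partition g).exists.choose

theorem ind_eq_filter_owner (i : Fin n) : A.ind i = Finset.univ.filter (A.owner · = i) := by
  ext g
  have hown : g ∈ A.ind (A.owner g) := (A.ind_partition g).exists.choose_spec
  simp only [Finset.mem_filter, Finset.mem_univ, true_and]
  exact ⟨fun hg => (A.ind_partition g).unique hown hg, fun h => h ▸ hown⟩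

noncomputable def shares (l : ℕ) : Fin n → Fin l → ℝ :=
  fun i j => volume.real (A.piece i ∩ dgInterval l j)

theorem shares_mem_shareMatrices : A.shares l ∈ shareMatrices n l := by
  refine ⟨fun _ _ => measureReal_nonneg, fun j => ?_⟩
  have hdisj : Pairwise (Disjoint on fun i => A.piece i ∩ dgInterval l j) := fun a b hab =>
    (disjoint_iff_inter_eq_empty.2 (A.piece_disjoint a b hab)).mono
      inter_subset_left inter_subset_left
  have hcover : ⋃ i, A.piece i ∩ dgInterval l j = dgInterval l j := by
    rw [← iUnion_inter, A.piece_cover, inter_eq_right.2 (dgInterval_subset_Ico j)]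
  rw [← volume_real_dgInterval j, ← hcover, measureReal_iUnion_fintype hdisj
    (fun i => (A.piece_measurable i).inter measurableSet_Ico)
    (fun i => ((measure_mono inter_subset_right).trans_lt measure_Ico_lt_top).ne)]
  rfl

theorem util_eq_utilVec (vM : Fin n → Fin m → ℝ) (vC : Fin n → Fin l → ℝ) :
    util vM vC A = utilVec vM vC A.owner (A.shares l) := by
  funext i
  rw [util, valOn, ind_eq_filter_owner]
  rfl

theorem util_mem_utilSet (vM : Fin n → Fin m → ℝ) (vC : Fin n → Fin l → ℝ) :
    util vM vC A ∈ utilSet vM vC :=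
  mem_iUnion.2 ⟨A.owner, A.shares l, A.shares_mem_shareMatrices, (A.util_eq_utilVec vM vC).symm⟩

end decompose

section construct

variable {x : Fin n → Fin l → ℝ}

noncomputable def cutPoint (x : Fin n → Fin l → ℝ) (j : Fin l) (k : ℕ) : ℝ :=
  (j : ℝ) / l + ∑ i with i.val < k, x i j

def slice (x : Fin n → Fin l → ℝ) (i : Fin n) (j : Fin l) : Set ℝ :=
  Ico (cutPoint x j i) (cutPoint x j (i + 1))

def cakePiece (x : Fin n → Fin l → ℝ) (i : Fin n) : Set ℝ := ⋃ j, slice x i j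

theorem cutPoint_add_one (i : Fin n) (j : Fin l) :
    cutPoint x j (i + 1) = cutPoint x j i + x i j := by
  have hfilter : Finset.univ.filter (fun i' : Fin n => (i' : ℕ) < i + 1)
      = insert i (Finset.univ.filter (fun i' : Fin n => (i' : ℕ) < i)) := by
    ext i'
    simp [le_iff_eq_or_lt, Fin.val_inj]
  rw [cutPoint, cutPoint, hfilter, Finset.sum_insert (by simp)]
  ring

theorem monotone_cutPoint (hx : x ∈ shareMatrices n l) (j : Fin l) : Monotone (cutPoint x j) :=
  fun _ _ hk => by
    unfold cutPoint
    gcongr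
    exact fun i _ _ => hx.1 i j

theorem iUnion_slice (hx : x ∈ shareMatrices n l) (j : Fin l) :
    ⋃ i, slice x i j = dgInterval l j := by
  have hlast : Finset.univ.filter (fun i : Fin n => (i : ℕ) < n) = Finset.univ :=
    Finset.filter_true_of_mem fun i _ => i.isLt
  change ⋃ i : Fin n, Ico (cutPoint x j i) (cutPoint x j (i + 1)) = _
  rw [(monotone_cutPoint hx j).iUnion_fin_Ico_succ n, cutPoint, cutPoint, hlast,
    hx.2 j, dgInterval]
  simp only [Nat.not_lt_zero, Finset.filter_false, Finset.sum_empty, add_zero]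
  ring_nf

theorem slice_subset_dgInterval (hx : x ∈ shareMatrices n l) (i : Fin n) (j : Fin l) :
    slice x i j ⊆ dgInterval l j :=
  iUnion_slice hx j ▸ subset_iUnion (slice x · j) i

theorem volume_real_slice (hx : x ∈ shareMatrices n l) (i : Fin n) (j : Fin l) :
    volume.real (slice x i j) = x i j := by
  rw [slice, cutPoint_add_one, Real.volume_real_Ico_of_le (le_add_of_nonneg_right (hx.1 i j))]
  ring

theorem cakePiece_inter_dgInterval (hx : x ∈ shareMatrices n l) (i : Fin n) (j : Fin l) :
    cakePiece x i ∩ dgInterval l j = slice x i j := by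
  refine Subset.antisymm (fun y ⟨hy, hyj⟩ => ?_) fun y hy =>
    ⟨mem_iUnion.2 ⟨j, hy⟩, slice_subset_dgInterval hx i j hy⟩
  obtain ⟨j', hj'⟩ := mem_iUnion.1 hy
  obtain rfl : j' = j := by
    by_contra hne
    exact disjoint_left.1 (pairwise_disjoint_dgInterval hne)
      (slice_subset_dgInterval hx i j' hj') hyj
  exact hj'

theorem pairwise_disjoint_cakePiece (hx : x ∈ shareMatrices n l) :
    Pairwise (Disjoint on cakePiece x) := by
  intro a b hab
  simp only [onFun, cakePiece, disjoint_iUnion_left, disjoint_iUnion_right]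
  intro j j'
  by_cases hj : j' = j
  · subst hj
    exact (monotone_cutPoint hx j').pairwise_disjoint_on_fin_Ico_succ n hab
  · exact (pairwise_disjoint_dgInterval hj).mono
      (slice_subset_dgInterval hx a j') (slice_subset_dgInterval hx b j)

theorem iUnion_cakePiece (hl : 0 < l) (hx : x ∈ shareMatrices n l) :
    ⋃ i, cakePiece x i = Ico 0 1 := by
  simp only [cakePiece]
  rw [iUnion_comm, ← iUnion_dgInterval hl]
  exact iUnion_congr (iUnion_slice hx)

noncomputable def ofShares (hl : 0 < l) (f : Fin m → Fin n) (x : Fin n → Fin l → ℝ)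
    (hx : x ∈ shareMatrices n l) : Alloc n m where
  ind i := Finset.univ.filter (f · = i)
  piece := cakePiece x
  ind_partition g := ⟨f g, by simp, fun _ hi => (Finset.mem_filter.1 hi).2.symm⟩
  piece_measurable _ := MeasurableSet.iUnion fun _ => measurableSet_Ico
  piece_disjoint _ _ hab := disjoint_iff_inter_eq_empty.1 (pairwise_disjoint_cakePiece hx hab)
  piece_cover := iUnion_cakePiece hl hx

variable (vM : Fin n → Fin m → ℝ) (vC : Fin n → Fin l → ℝ)

theorem util_ofShares (hl : 0 < l) (f : Fin m → Fin n) (hx : x ∈ shareMatrices n l) :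
    util vM vC (ofShares hl f x hx) = utilVec vM vC f x := by
  funext i
  refine congrArg (_ + ·) (Finset.sum_congr rfl fun j _ => ?_)
  change vC i j * volume.real (cakePiece x i ∩ dgInterval l j) = _
  rw [cakePiece_inter_dgInterval hx, volume_real_slice hx]

theorem condStar_ofShares (hl : 0 < l) (f : Fin m → Fin n) (hx : x ∈ shareMatrices n l) :
    CondStar l (ofShares hl f x hx) := fun i j => by
  change cakePiece x i ∩ _ = ∅ ∨ 0 < volume (cakePiece x i ∩ _)
  rw [cakePiece_inter_dgInterval hx]
  exact Real.Ico_eq_empty_or_volume_pos _ _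

end construct

end Alloc

variable (vM : Fin n → Fin m → ℝ) (vC : Fin n → Fin l → ℝ)

theorem exists_condStar_util_eq (hl : 0 < l) {u : Fin n → ℝ} (hu : u ∈ utilSet vM vC) :
    ∃ A : Alloc n m, util vM vC A = u ∧ CondStar l A := by
  obtain ⟨f, x, hx, rfl⟩ := mem_iUnion.1 hu
  exact ⟨_, Alloc.util_ofShares vM vC hl f hx, Alloc.condStar_ofShares hl f hx⟩

theorem utilOpt_iff_isMaxOn (hl : 0 < l) (A : Alloc n m) :
    UtilOpt vM vC A ↔ IsMaxOn (fun u => ∑ i, u i) (utilSet vM vC) (util vM vC A) := by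
  refine ⟨fun hA u hu => ?_, fun hA A' => hA (A'.util_mem_utilSet vM vC)⟩
  obtain ⟨A', rfl, -⟩ := exists_condStar_util_eq vM vC hl hu
  exact hA A'

end allocations

theorem exists_phiFair_general {n m l : ℕ} (hn : 0 < n) (hl : 0 < l)
    (vM : Fin n → Fin m → ℝ) (vC : Fin n → Fin l → ℝ)
    (Φ : (Fin n → ℝ) → ℝ)
    (hconv : ∀ z w : Fin n → ℝ, z ≠ w → ∀ t : ℝ, 0 < t → t < 1 →
      Φ (fun i => t * z i + (1 - t) * w i) < t * Φ z + (1 - t) * Φ w) :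
    ∃ A : Alloc n m, PhiFair vM vC Φ A ∧ CondStar l A := by
  have hΦ : ContinuousOn Φ (utilSet vM vC) :=
    ((strictConvexOn_univ_of_lt hconv).convexOn.continuousOn isOpen_univ).mono (subset_univ _)
  obtain ⟨u, hu, hmax, hmin⟩ := (isCompact_utilSet vM vC).exists_isMaxOn_isMinOn_maximizers
    (utilSet_nonempty vM vC hn) (continuous_finsetSum _ fun i _ => continuous_apply i) hΦ
  obtain ⟨A, rfl, hA⟩ := exists_condStar_util_eq vM vC hl hu
  refine ⟨A, ⟨(utilOpt_iff_isMaxOn vM vC hl A).2 hmax, fun A' hA' => ?_⟩, hA⟩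
  exact hmin ⟨A'.util_mem_utilSet vM vC, (utilOpt_iff_isMaxOn vM vC hl A').1 hA'⟩

/-- when all agents' valuations are binary and linear, for every
symmetric strictly convex function `Φ : ℝ^N → ℝ` there exists a `Φ`-fair allocation
of the mixed goods, and one can choose it to satisfy condition (*). -/
theorem exists_phiFair {n m l : ℕ} (hn : 0 < n) (hl : 0 < l)
    (vM : Fin n → Fin m → ℝ) (vC : Fin n → Fin l → ℝ)
    (hbinM : ∀ i g, vM i g = 0 ∨ vM i g = 1)
    (hbinC : ∀ i j, vC i j = 0 ∨ vC i j = 1)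
    (Φ : (Fin n → ℝ) → ℝ)
    (hsym : ∀ (σ : Equiv.Perm (Fin n)) (z : Fin n → ℝ), Φ (z ∘ σ) = Φ z)
    (hconv : ∀ z w : Fin n → ℝ, z ≠ w → ∀ t : ℝ, 0 < t → t < 1 →
      Φ (fun i => t * z i + (1 - t) * w i) < t * Φ z + (1 - t) * Φ w) :
    ∃ A : Alloc n m, PhiFair vM vC Φ A ∧ CondStar l A :=
  exists_phiFair_general hn hl vM vC Φ hconv
end

section
/- (Stromquist–Woodall) Let u_i and u_j be two non-atomic, countably additive valuations on the Borel subsets of [0,1), and let H ⊆ [0,1) be a Borel set with u_i(H) > 0 and u_j(H) > 0. Then for every α ∈ [0,1] there exists a Borel set H' ⊆ H such that u_i(H') = α·u_i(H) and u_j(H') = α·u_j(H). -/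
/-!
Put `ρ = μ + ν` and split `H` by a Hahn decomposition into `P`, where `ν ≤ μ`, and `N`, where
`μ ≤ ν`. Initial segments `P ∩ Iic t`, reparametrised by their `ρ`-measure `x`, form nested sets
`E_P x` whose measure under any `μ ≤ ρ` is `1`-Lipschitz in `x`; likewise `E_N y` inside `N`.
The set `E_P x ∪ E_N (2c - x)` has `ρ`-measure `2c`, and its `(μ - ν)`-measure is continuous in
`x`, nonpositive at the least admissible `x` and nonnegative at the largest, hence vanishes
somewhere: there `μ` and `ν` both take the value `c`. Rescaling `μ` and `ν` to equal mass on `H`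
turns this into the theorem.
-/

open MeasureTheory Set Filter Topology

theorem exists_mem_Icc_apply_add_apply_sub_eq_zero {f g : ℝ → ℝ} (hf : Continuous f)
    (hg : Continuous g) {a b d s : ℝ} (ha : 0 ≤ a) (hb : 0 ≤ b) (hs0 : 0 ≤ s) (hs : s ≤ a + b)
    (hf_mem : ∀ x, f x ∈ Icc 0 d) (hg_mem : ∀ y, g y ∈ Icc (-d) 0)
    (hf0 : f 0 = 0) (hfa : f a = d) (hg0 : g 0 = 0) (hgb : g b = -d) :
    ∃ x ∈ Icc 0 a, s - x ∈ Icc 0 b ∧ f x + g (s - x) = 0 := by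
  set k := fun x => f x + g (s - x)
  have hk : Continuous k := hf.add (hg.comp (continuous_sub_left s))
  have hlo : k (max 0 (s - b)) ≤ 0 := by
    rcases le_total 0 (s - b) with h | h
    · simp only [k, max_eq_right h, sub_sub_cancel, hgb]; linarith [(hf_mem (s - b)).2]
    · simp only [k, max_eq_left h, hf0, sub_zero, zero_add]; exact (hg_mem s).2
  have hhi : 0 ≤ k (min a s) := by
    rcases le_total a s with h | h
    · simp only [k, min_eq_left h, hfa]; linarith [(hg_mem (s - a)).1]
    · simp only [k, min_eq_right h, sub_self, hg0, add_zero]; exact (hf_mem s).1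
  obtain ⟨x, ⟨hx₁, hx₂⟩, hkx⟩ := intermediate_value_Icc
    (max_le (le_min ha hs0) (by rw [le_min_iff]; constructor <;> linarith))
    hk.continuousOn ⟨hlo, hhi⟩
  refine ⟨x, ⟨(le_max_left _ _).trans hx₁, hx₂.trans (min_le_left _ _)⟩, ⟨?_, ?_⟩, hkx⟩
  · linarith [min_le_right a s]
  · linarith [le_max_right 0 (s - b)]

namespace MeasureTheory

section Comparison

variable {α : Type*} [MeasurableSpace α] {μ ν : Measure α} {T U : Set α}

theorem measureReal_sub_measureReal_le [IsFiniteMeasure μ] [IsFiniteMeasure ν] (hTU : T ⊆ U)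
    (hT : MeasurableSet T) (hU : MeasurableSet U)
    (h : ∀ t, MeasurableSet t → t ⊆ U → μ t ≤ ν t) :
    μ.real U - μ.real T ≤ ν.real U - ν.real T := by
  rw [← measureReal_sdiff hTU hT, ← measureReal_sdiff hTU hT]
  exact ENNReal.toReal_mono (measure_ne_top _ _) (h _ (hU.diff hT) sdiff_subset)

theorem measureReal_sub_measureReal_mem_Icc [IsFiniteMeasure μ] [IsFiniteMeasure ν]
    (hTU : T ⊆ U) (hT : MeasurableSet T) (hU : MeasurableSet U)
    (h : ∀ t, MeasurableSet t → t ⊆ U → ν t ≤ μ t) :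
    μ.real T - ν.real T ∈ Icc 0 (μ.real U - ν.real U) := by
  have hT' := measureReal_sub_measureReal_le (empty_subset T) MeasurableSet.empty hT
    fun t ht htT => h t ht (htT.trans hTU)
  have hU' := measureReal_sub_measureReal_le hTU hT hU h
  simp only [measureReal_empty, sub_zero] at hT'
  constructor <;> linarith

theorem abs_measureReal_sub_le_of_le {ρ : Measure α} [IsFiniteMeasure ρ] (hμρ : μ ≤ ρ)
    (hTU : T ⊆ U ∨ U ⊆ T) (hT : MeasurableSet T) (hU : MeasurableSet U) :
    |μ.real T - μ.real U| ≤ |ρ.real T - ρ.real U| := by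
  have := isFiniteMeasure_of_le ρ hμρ
  have nested {T U : Set α} (hTU : T ⊆ U) (hT : MeasurableSet T) (hU : MeasurableSet U) :
      |μ.real T - μ.real U| ≤ |ρ.real T - ρ.real U| := by
    rw [abs_sub_comm, abs_of_nonneg (sub_nonneg.2 (measureReal_mono hTU)), abs_sub_comm,
      abs_of_nonneg (sub_nonneg.2 (measureReal_mono hTU))]
    exact measureReal_sub_measureReal_le hTU hT hU fun t _ _ => hμρ t
  rcases hTU with hTU | hUT
  · exact nested hTU hT hU
  · rw [abs_sub_comm, abs_sub_comm (ρ.real T)]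
    exact nested hUT hU hT

end Comparison

theorem continuous_measureReal_Iic (μ : Measure ℝ) [IsFiniteMeasure μ] [NullSingletonClass μ] :
    Continuous fun t => μ.real (Iic t) := by
  refine continuous_iff_continuousAt.2 fun b => ?_
  have hIcc : Tendsto (fun t => μ.real (Icc (b - |t - b|) (b + |t - b|))) (𝓝 b) (𝓝 0) := by
    have := (ENNReal.tendsto_toReal (by simp)).comp ((tendsto_measure_Icc μ b).comp
      ((continuous_abs.comp (continuous_sub_right b)).tendsto' b 0 (by simp)))
    simpa [Function.comp_def, measureReal_def] using this
  have step {s t : ℝ} (hst : s ≤ t) : μ.real (Iic t) - μ.real (Iic s) = μ.real (Ioc s t) := by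
    rw [← measureReal_sdiff (Iic_subset_Iic.2 hst) measurableSet_Iic, Iic_sdiff_Iic]
  refine tendsto_iff_dist_tendsto_zero.2 (squeeze_zero (fun _ => dist_nonneg) (fun t => ?_) hIcc)
  rw [Real.dist_eq]
  rcases le_total b t with hbt | htb
  · rw [abs_of_nonneg (sub_nonneg.2 hbt), step hbt, abs_of_nonneg measureReal_nonneg]
    exact measureReal_mono (Ioc_subset_Icc_self.trans (Icc_subset_Icc (by linarith) (by linarith)))
  · rw [abs_of_nonpos (sub_nonpos.2 htb), abs_sub_comm, step htb, abs_of_nonneg measureReal_nonneg]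
    exact measureReal_mono (Ioc_subset_Icc_self.trans (Icc_subset_Icc (by linarith) (by linarith)))

theorem exists_lipschitz_exhaustion (ρ : Measure ℝ) [IsFiniteMeasure ρ] [NullSingletonClass ρ]
    {A : Set ℝ} (hA : MeasurableSet A) {a b : ℝ} (hAab : A ⊆ Icc a b) :
    ∃ E : ℝ → Set ℝ, (∀ x, E x ⊆ A) ∧ (∀ x, MeasurableSet (E x)) ∧
      (∀ x ∈ Icc 0 (ρ.real A), ρ.real (E x) = x) ∧
      ∀ μ ≤ ρ, LipschitzWith 1 (fun x => μ.real (E x)) ∧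
        μ.real (E 0) = 0 ∧ μ.real (E (ρ.real A)) = μ.real A := by
  have hcont : Continuous fun t => ρ.real (A ∩ Iic t) := by
    simpa only [measureReal_restrict_apply measurableSet_Iic, inter_comm] using
      continuous_measureReal_Iic (ρ.restrict A)
  have hAa : A ∩ Iic a ⊆ {a} := fun z hz => le_antisymm hz.2 (hAab hz.1).1
  have hAb : A ⊆ Iic b := fun z hz => (hAab hz).2
  have ha : ρ.real (A ∩ Iic a) = 0 :=
    le_antisymm ((measureReal_mono hAa).trans_eq (by simp [measureReal_def])) measureReal_nonneg
  have hb : ρ.real (A ∩ Iic b) = ρ.real A := by rw [inter_eq_left.2 hAb]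
  have hsurj (x : ℝ) : ∃ t, ρ.real (A ∩ Iic t) = projIcc 0 (ρ.real A) measureReal_nonneg x :=
    intermediate_value_univ a b hcont (by rw [ha, hb]; exact (projIcc _ _ _ x).2)
  choose τ hτ using hsurj
  have hmeas (x : ℝ) : MeasurableSet (A ∩ Iic (τ x)) := hA.inter measurableSet_Iic
  have hchain (x y : ℝ) : A ∩ Iic (τ x) ⊆ A ∩ Iic (τ y) ∨ A ∩ Iic (τ y) ⊆ A ∩ Iic (τ x) :=
    (le_total (τ x) (τ y)).imp (fun h => inter_subset_inter_right _ (Iic_subset_Iic.2 h))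
      (fun h => inter_subset_inter_right _ (Iic_subset_Iic.2 h))
  refine ⟨fun x => A ∩ Iic (τ x), fun x => inter_subset_left, hmeas,
    fun x hx => by rw [hτ, projIcc_of_mem _ hx], fun μ hμρ => ⟨?_, ?_, ?_⟩⟩
  · refine LipschitzWith.of_dist_le_mul fun x y => ?_
    simp only [Real.dist_eq, NNReal.coe_one, one_mul]
    calc |μ.real (A ∩ Iic (τ x)) - μ.real (A ∩ Iic (τ y))|
        ≤ |ρ.real (A ∩ Iic (τ x)) - ρ.real (A ∩ Iic (τ y))| :=
          abs_measureReal_sub_le_of_le hμρ (hchain x y) (hmeas x) (hmeas y)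
      _ ≤ |x - y| := by rw [hτ, hτ]; exact abs_projIcc_sub_projIcc _
  · have := abs_measureReal_sub_le_of_le hμρ (Or.inr (empty_subset _)) (hmeas 0)
      MeasurableSet.empty
    simpa [hτ] using this
  · have := abs_measureReal_sub_le_of_le hμρ (Or.inl inter_subset_left) (hmeas (ρ.real A)) hA
    simpa [hτ, sub_eq_zero] using this

theorem exists_subset_measureReal_eq_of_measureReal_eq (μ ν : Measure ℝ) [IsFiniteMeasure μ]
    [IsFiniteMeasure ν] [NullSingletonClass μ] [NullSingletonClass ν] {H : Set ℝ}
    (hH : MeasurableSet H) {a b : ℝ} (hHab : H ⊆ Icc a b) (hμν : μ.real H = ν.real H) {c : ℝ}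
    (hc0 : 0 ≤ c) (hc : c ≤ μ.real H) :
    ∃ S ⊆ H, MeasurableSet S ∧ μ.real S = c ∧ ν.real S = c := by
  have : NullSingletonClass (μ + ν) := ⟨fun x => by simp⟩
  have hμρ : μ ≤ μ + ν := Measure.le_add_right le_rfl
  have hνρ : ν ≤ μ + ν := Measure.le_add_left le_rfl
  obtain ⟨s, hs, hνμ_s, hμν_s⟩ := hahn_decomposition μ ν
  obtain ⟨EP, hEP_sub, hEP_meas, hEP, hEP_lip⟩ :=
    exists_lipschitz_exhaustion (μ + ν) (hH.inter hs) (inter_subset_left.trans hHab)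
  obtain ⟨EN, hEN_sub, hEN_meas, hEN, hEN_lip⟩ :=
    exists_lipschitz_exhaustion (μ + ν) (hH.diff hs) (sdiff_subset.trans hHab)
  set d := μ.real (H ∩ s) - ν.real (H ∩ s)
  have hdN : μ.real (H \ s) - ν.real (H \ s) = -d := by
    linarith [measureReal_inter_add_sdiff (μ := μ) (s := H) hs,
      measureReal_inter_add_sdiff (μ := ν) (s := H) hs]
  have h2c : 2 * c ≤ (μ + ν).real (H ∩ s) + (μ + ν).real (H \ s) := by
    rw [measureReal_add_apply, measureReal_add_apply, add_add_add_comm,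
      measureReal_inter_add_sdiff hs, measureReal_inter_add_sdiff hs]
    linarith
  have hP_mem (x : ℝ) : μ.real (EP x) - ν.real (EP x) ∈ Icc 0 d :=
    measureReal_sub_measureReal_mem_Icc (hEP_sub x) (hEP_meas x) (hH.inter hs)
      fun t ht htP => hνμ_s t ht (htP.trans inter_subset_right)
  have hN_mem (y : ℝ) : μ.real (EN y) - ν.real (EN y) ∈ Icc (-d) 0 := by
    have := measureReal_sub_measureReal_mem_Icc (hEN_sub y) (hEN_meas y) (hH.diff hs)
      fun t ht htN => hμν_s t ht fun z hz => (htN hz).2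
    constructor <;> linarith [this.1, this.2]
  obtain ⟨x, hx, hy, hxy⟩ := exists_mem_Icc_apply_add_apply_sub_eq_zero
    (f := fun x => μ.real (EP x) - ν.real (EP x)) (g := fun y => μ.real (EN y) - ν.real (EN y))
    (a := (μ + ν).real (H ∩ s)) (b := (μ + ν).real (H \ s))
    ((hEP_lip μ hμρ).1.continuous.sub (hEP_lip ν hνρ).1.continuous)
    ((hEN_lip μ hμρ).1.continuous.sub (hEN_lip ν hνρ).1.continuous)
    measureReal_nonneg measureReal_nonneg (by linarith : 0 ≤ 2 * c) h2c hP_mem hN_mem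
    (by rw [(hEP_lip μ hμρ).2.1, (hEP_lip ν hνρ).2.1, sub_zero])
    (by rw [(hEP_lip μ hμρ).2.2, (hEP_lip ν hνρ).2.2])
    (by rw [(hEN_lip μ hμρ).2.1, (hEN_lip ν hνρ).2.1, sub_zero])
    (by rw [(hEN_lip μ hμρ).2.2, (hEN_lip ν hνρ).2.2, hdN])
  have hdisj : Disjoint (EP x) (EN (2 * c - x)) :=
    disjoint_sdiff_inter.symm.mono (hEP_sub x) (hEN_sub _)
  have hρP := hEP x hx
  have hρN := hEN _ hy
  rw [measureReal_add_apply] at hρP hρN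
  refine ⟨EP x ∪ EN (2 * c - x), union_subset ((hEP_sub x).trans inter_subset_left)
    ((hEN_sub _).trans sdiff_subset), (hEP_meas x).union (hEN_meas _), ?_⟩
  rw [measureReal_union hdisj (hEN_meas _), measureReal_union hdisj (hEN_meas _)]
  constructor <;> linarith

theorem exists_subset_measureReal_eq_mul (μ ν : Measure ℝ) [IsFiniteMeasure μ] [IsFiniteMeasure ν]
    [NullSingletonClass μ] [NullSingletonClass ν] {H : Set ℝ} (hH : MeasurableSet H) {a b : ℝ}
    (hHab : H ⊆ Icc a b) (hμ : 0 < μ.real H) (hν : 0 < ν.real H) {t : ℝ} (ht0 : 0 ≤ t)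
    (ht1 : t ≤ 1) :
    ∃ S ⊆ H, MeasurableSet S ∧ μ.real S = t * μ.real H ∧ ν.real S = t * ν.real H := by
  set μ' := (ν.real H).toNNReal • μ
  set ν' := (μ.real H).toNNReal • ν
  have : NullSingletonClass μ' := ⟨fun x => by simp [μ']⟩
  have : NullSingletonClass ν' := ⟨fun x => by simp [ν']⟩
  have hμ' (s : Set ℝ) : μ'.real s = ν.real H * μ.real s := by
    simp [μ', Real.coe_toNNReal _ measureReal_nonneg]
  have hν' (s : Set ℝ) : ν'.real s = μ.real H * ν.real s := by
    simp [ν', Real.coe_toNNReal _ measureReal_nonneg]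
  obtain ⟨S, hSH, hS, hμS, hνS⟩ := exists_subset_measureReal_eq_of_measureReal_eq μ' ν' hH hHab
    (by rw [hμ', hν', mul_comm]) (c := t * (ν.real H * μ.real H)) (by positivity)
    (by rw [hμ']; nlinarith [mul_pos hν hμ])
  refine ⟨S, hSH, hS, mul_left_cancel₀ hν.ne' ?_, mul_left_cancel₀ hμ.ne' ?_⟩
  · rw [← hμ', hμS]; ring
  · rw [← hν', hνS]; ring

end MeasureTheory

/-- Stromquist–Woodall: let `u_i` and `u_j` be two non-atomic,
countably additive valuations on the Borel subsets of `[0,1)` (finite non-atomic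
Borel measures), and let `H ⊆ [0,1)` be a Borel set with `u_i(H) > 0` and
`u_j(H) > 0`. Then for every `α ∈ [0,1]` there exists a Borel set `H' ⊆ H` with
`u_i(H') = α·u_i(H)` and `u_j(H') = α·u_j(H)`. -/
theorem stromquist_woodall
    (ui uj : Measure ℝ) [IsFiniteMeasure ui] [IsFiniteMeasure uj]
    (hui : ∀ x : ℝ, ui {x} = 0) (huj : ∀ x : ℝ, uj {x} = 0)
    (H : Set ℝ) (hHm : MeasurableSet H) (hHsub : H ⊆ Set.Ico (0 : ℝ) 1)
    (hi : 0 < (ui H).toReal) (hj : 0 < (uj H).toReal)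
    (α : ℝ) (hα0 : 0 ≤ α) (hα1 : α ≤ 1) :
    ∃ H' : Set ℝ, H' ⊆ H ∧ MeasurableSet H' ∧
      (ui H').toReal = α * (ui H).toReal ∧ (uj H').toReal = α * (uj H).toReal := by
  have : NullSingletonClass ui := ⟨hui⟩
  have : NullSingletonClass uj := ⟨huj⟩
  exact exists_subset_measureReal_eq_mul ui uj hHm (hHsub.trans Ico_subset_Icc_self) hi hj hα0 hα1
end

section
/- Let all agents' valuations be binary and linear, with every good positively valued by some agent. If an allocation A of the mixed goods satisfies condition (*) and is Pareto optimal, then u_i(A_j) ≤ u_j(A_j) for all agents i and j. -/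
open MeasureTheory

lemma dgInterval_disjoint {l : ℕ} {c c' : Fin l} (h : c ≠ c') :
    dgInterval l c ∩ dgInterval l c' = ∅ := by
  have hl : (0:ℝ) < l := by exact_mod_cast c.pos
  apply Set.eq_empty_iff_forall_notMem.mpr
  rintro x ⟨⟨h1, h2⟩, ⟨h3, h4⟩⟩
  have hA : ((c:ℕ):ℝ) ≤ x * l := (div_le_iff₀ hl).mp h1
  have hB : x * l < ((c':ℕ):ℝ) + 1 := (lt_div_iff₀ hl).mp h4
  have hC : ((c':ℕ):ℝ) ≤ x * l := (div_le_iff₀ hl).mp h3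
  have hD : x * l < ((c:ℕ):ℝ) + 1 := (lt_div_iff₀ hl).mp h2
  have e1 : ((c:ℕ):ℝ) < ((c':ℕ):ℝ) + 1 := lt_of_le_of_lt hA hB
  have e2 : ((c':ℕ):ℝ) < ((c:ℕ):ℝ) + 1 := lt_of_le_of_lt hC hD
  have n1 : (c:ℕ) < (c':ℕ) + 1 := by exact_mod_cast e1
  have n2 : (c':ℕ) < (c:ℕ) + 1 := by exact_mod_cast e2
  exact h (Fin.ext (by omega))

/-- for binary linear valuations where every good is positively
valued by some agent, if an allocation satisfies condition (*) and is Pareto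
optimal, then `u_i(A_j) ≤ u_j(A_j)` for all agents `i, j`. -/
theorem PO_implies_val_le {n m l : ℕ} (hl : 0 < l)
    (vM : Fin n → Fin m → ℝ) (vC : Fin n → Fin l → ℝ)
    (hbinM : ∀ i g, vM i g = 0 ∨ vM i g = 1)
    (hbinC : ∀ i j, vC i j = 0 ∨ vC i j = 1)
    (hgoodM : ∀ g : Fin m, ∃ i, 0 < vM i g)
    (hgoodC : ∀ j : Fin l, ∃ i, 0 < vC i j)
    (A : Alloc n m)
    (hstar : CondStar l A)
    (hPO : PO vM vC A) :
    ∀ i j : Fin n, valOn vM vC A i j ≤ util vM vC A j := by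
  intro i j
  classical
  by_contra hcon
  push_neg at hcon
  have hij : i ≠ j := by
    rintro rfl
    exact absurd hcon (lt_irrefl _)
  have hpt : ∀ a b : Fin n, a ≠ b → ∀ x, x ∈ A.piece a → x ∉ A.piece b := by
    intro a b h x hxa hxb
    have hd := A.piece_disjoint a b h
    exact absurd (Set.mem_inter hxa hxb) (by simp [hd])
  have hMnn : ∀ k g, 0 ≤ vM k g := by
    intro k g; rcases hbinM k g with h | h <;> simp [h]
  have hCnn : ∀ k c, 0 ≤ vC k c := by
    intro k c; rcases hbinC k c with h | h <;> simp [h]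
  have hsum : valInd vM j (A.ind j) + valDiv vC j (A.piece j)
      < valInd vM i (A.ind j) + valDiv vC i (A.piece j) := hcon
  have hkey : (∃ g ∈ A.ind j, vM j g < vM i g) ∨
      (∃ c : Fin l, vC j c * (volume (A.piece j ∩ dgInterval l c)).toReal
        < vC i c * (volume (A.piece j ∩ dgInterval l c)).toReal) := by
    by_contra hno
    push_neg at hno
    obtain ⟨h1, h2⟩ := hno
    have hA : valInd vM i (A.ind j) ≤ valInd vM j (A.ind j) :=
      Finset.sum_le_sum fun g hg => h1 g hg
    have hB : valDiv vC i (A.piece j) ≤ valDiv vC j (A.piece j) :=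
      Finset.sum_le_sum fun c _ => h2 c
    linarith
  rcases hkey with ⟨g, hgj, hglt⟩ | ⟨c, hclt⟩
  · -- transfer indivisible good g from j to i
    have hig : vM i g = 1 := by
      rcases hbinM i g with h | h
      · exact absurd (h ▸ hglt) (not_lt.mpr (hMnn j g))
      · exact h
    have hjg : vM j g = 0 := by
      rcases hbinM j g with h | h
      · exact h
      · rw [h, hig] at hglt; exact absurd hglt (lt_irrefl _)
    have huniq : ∀ k, g ∈ A.ind k → k = j := by
      intro k hk
      obtain ⟨w, hw, hu⟩ := A.ind_partition g
      rw [hu k hk, hu j hgj]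
    have hgi : g ∉ A.ind i := fun h => hij (huniq i h)
    set ind' : Fin n → Finset (Fin m) :=
      fun k => if k = i then insert g (A.ind i)
        else if k = j then (A.ind j).erase g else A.ind k with hind'
    let A' : Alloc n m :=
      { ind := ind'
        piece := A.piece
        ind_partition := by
          intro h
          by_cases hh : h = g
          · subst hh
            refine ⟨i, by simp [hind'], ?_⟩
            intro y hy
            by_cases hyi : y = i
            · exact hyi
            · by_cases hyj : y = j
              · subst hyj; simp [hind', hyi] at hy
              · simp [hind', hyi, hyj] at hy
                exact absurd (huniq y hy) hyj
          · obtain ⟨w, hw, hu⟩ := A.ind_partition h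
            have hmem : ∀ k, h ∈ ind' k ↔ h ∈ A.ind k := by
              intro k
              by_cases hk1 : k = i
              · subst hk1; simp [hind', hh]
              · by_cases hk2 : k = j
                · subst hk2; simp [hind', hk1, hh]
                · simp [hind', hk1, hk2]
            exact ⟨w, (hmem w).mpr hw, fun y hy => hu y ((hmem y).mp hy)⟩
        piece_measurable := A.piece_measurable
        piece_disjoint := A.piece_disjoint
        piece_cover := A.piece_cover }
    apply hPO
    refine ⟨A', ?_, ⟨i, ?_⟩⟩
    · intro k
      by_cases hk1 : k = i
      · rw [hk1]
        have : valInd vM i (insert g (A.ind i)) = vM i g + valInd vM i (A.ind i) := by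
          simp [valInd, Finset.sum_insert hgi]
        simp only [util, valOn]
        show valInd vM i (A.ind i) + valDiv vC i (A.piece i)
          ≤ valInd vM i (ind' i) + valDiv vC i (A.piece i)
        have : ind' i = insert g (A.ind i) := by simp [hind']
        rw [this]
        simp [valInd, Finset.sum_insert hgi]
        linarith [hMnn i g]
      · by_cases hk2 : k = j
        · rw [hk2]
          show util vM vC A j ≤ valInd vM j (ind' j) + valDiv vC j (A.piece j)
          have h1 : ind' j = (A.ind j).erase g := by simp [hind', hij.symm]
          have h2 : valInd vM j ((A.ind j).erase g) = valInd vM j (A.ind j) :=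
            Finset.sum_erase _ hjg
          rw [h1, h2]; exact le_refl _
        · show util vM vC A k ≤ valInd vM k (ind' k) + valDiv vC k (A.piece k)
          have h1 : ind' k = A.ind k := by simp [hind', hk1, hk2]
          rw [h1]; exact le_refl _
    · show util vM vC A i < valInd vM i (ind' i) + valDiv vC i (A.piece i)
      have h1 : ind' i = insert g (A.ind i) := by simp [hind']
      rw [h1]
      have h2 : valInd vM i (insert g (A.ind i)) = vM i g + valInd vM i (A.ind i) := by
        simp [valInd, Finset.sum_insert hgi]
      rw [h2]
      simp only [util, valOn]
      rw [hig]; linarith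
  · -- transfer the chunk S = piece j ∩ I_c from j to i
    set Ic : Set ℝ := dgInterval l c with hIc
    set S : Set ℝ := A.piece j ∩ Ic with hS
    set t : ℝ := (volume S).toReal with ht
    have htnn : 0 ≤ t := ENNReal.toReal_nonneg
    have hic : vC i c = 1 := by
      rcases hbinC i c with h | h
      · rw [h, zero_mul] at hclt
        exact absurd hclt (not_lt.mpr (mul_nonneg (hCnn j c) htnn))
      · exact h
    have htpos : 0 < t := by
      rcases hbinC j c with h | h
      · rw [h, zero_mul, hic, one_mul] at hclt; exact hclt
      · rw [h, hic] at hclt; exact absurd hclt (lt_irrefl _)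
    have hjc : vC j c = 0 := by
      rcases hbinC j c with h | h
      · exact h
      · rw [h, hic, one_mul] at hclt; exact absurd hclt (lt_irrefl _)
    have hmeasIc : MeasurableSet Ic := measurableSet_Ico
    have hmeasS : MeasurableSet S := (A.piece_measurable j).inter hmeasIc
    have hSIc : S ⊆ Ic := Set.inter_subset_right
    have hSj : S ⊆ A.piece j := Set.inter_subset_left
    have hIcfin : volume Ic < ⊤ := by
      rw [hIc]; unfold dgInterval; rw [Real.volume_Ico]; exact ENNReal.ofReal_lt_top
    have hSfin : volume S ≠ ⊤ := ((measure_mono hSIc).trans_lt hIcfin).ne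
    have hSdis : ∀ c' : Fin l, c' ≠ c → S ∩ dgInterval l c' = ∅ := by
      intro c' hc'
      have hd := dgInterval_disjoint (c := c) (c' := c') (Ne.symm hc')
      apply Set.eq_empty_iff_forall_notMem.mpr
      rintro x ⟨hxS, hxc'⟩
      exact Set.eq_empty_iff_forall_notMem.mp hd x ⟨hSIc hxS, hxc'⟩
    set P : Fin n → Set ℝ :=
      fun k => if k = i then A.piece i ∪ S
        else if k = j then A.piece j \ S else A.piece k with hP
    have hmem : ∀ (k : Fin n) (x : ℝ),
        x ∈ P k ↔ if x ∈ S then k = i else x ∈ A.piece k := by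
      intro k x
      by_cases hk1 : k = i
      · rw [hk1]
        by_cases hx : x ∈ S
        · simp [hP, hx]
        · simp [hP, hx]
      · by_cases hk2 : k = j
        · rw [hk2]
          by_cases hx : x ∈ S
          · simp only [hP, if_pos hx]
            simp [hij.symm, hx, Ne.symm hij]
          · simp only [hP, if_neg hx]
            simp [Ne.symm hij, hx]
        · by_cases hx : x ∈ S
          · simp only [hP, if_pos hx]
            simp [hk1, hk2]
            exact fun h => absurd (hSj hx) (hpt k j hk2 x h)
          · simp only [hP, if_neg hx]
            simp [hk1, hk2]
    let A' : Alloc n m :=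
      { ind := A.ind
        piece := P
        ind_partition := A.ind_partition
        piece_measurable := by
          intro k
          simp only [hP]
          split_ifs
          · exact (A.piece_measurable i).union hmeasS
          · exact (A.piece_measurable j).diff hmeasS
          · exact A.piece_measurable k
        piece_disjoint := by
          intro a b hab
          apply Set.eq_empty_iff_forall_notMem.mpr
          rintro x ⟨ha, hb⟩
          rw [hmem] at ha hb
          by_cases hx : x ∈ S
          · rw [if_pos hx] at ha hb; exact hab (ha.trans hb.symm)
          · rw [if_neg hx] at ha hb; exact hpt a b hab x ha hb
        piece_cover := by
          have hcov : (⋃ k, P k) = ⋃ k, A.piece k := by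
            ext x
            simp only [Set.mem_iUnion]
            by_cases hx : x ∈ S
            · constructor
              · intro _; exact ⟨j, hSj hx⟩
              · intro _; exact ⟨i, (hmem i x).mpr (by simp [hx])⟩
            · constructor
              · rintro ⟨k, hk⟩
                exact ⟨k, by rw [hmem, if_neg hx] at hk; exact hk⟩
              · rintro ⟨k, hk⟩
                exact ⟨k, (hmem k x).mpr (by rw [if_neg hx]; exact hk)⟩
          rw [hcov, A.piece_cover] }
    -- valDiv computations
    have hdivj : valDiv vC j (A.piece j \ S) = valDiv vC j (A.piece j) := by
      apply Finset.sum_congr rfl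
      intro c' _
      by_cases hc' : c' = c
      · subst hc'
        have he : (A.piece j \ S) ∩ Ic = ∅ := by
          apply Set.eq_empty_iff_forall_notMem.mpr
          rintro x ⟨⟨hx1, hx2⟩, hx3⟩
          exact hx2 ⟨hx1, hx3⟩
        rw [show dgInterval l c' = Ic from rfl, he, hjc]
        simp
      · have he : (A.piece j \ S) ∩ dgInterval l c' = A.piece j ∩ dgInterval l c' := by
          have hd := hSdis c' hc'
          ext x
          constructor
          · rintro ⟨⟨hx1, _⟩, hx2⟩; exact ⟨hx1, hx2⟩
          · rintro ⟨hx1, hx2⟩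
            exact ⟨⟨hx1, fun hxS =>
              Set.eq_empty_iff_forall_notMem.mp hd x ⟨hxS, hx2⟩⟩, hx2⟩
        rw [he]
    have hdivi : valDiv vC i (A.piece i ∪ S) = valDiv vC i (A.piece i) + t := by
      have hterm : ∀ c' : Fin l,
          vC i c' * (volume ((A.piece i ∪ S) ∩ dgInterval l c')).toReal
            = vC i c' * (volume (A.piece i ∩ dgInterval l c')).toReal
              + (if c' = c then t else 0) := by
        intro c'
        by_cases hc' : c' = c
        · subst hc'
          have he : (A.piece i ∪ S) ∩ Ic = (A.piece i ∩ Ic) ∪ S := by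
            ext x
            constructor
            · rintro ⟨hx1 | hx1, hx2⟩
              · exact Or.inl ⟨hx1, hx2⟩
              · exact Or.inr hx1
            · rintro (⟨hx1, hx2⟩ | hx1)
              · exact ⟨Or.inl hx1, hx2⟩
              · exact ⟨Or.inr hx1, hSIc hx1⟩
          have hdisj : Disjoint (A.piece i ∩ Ic) S :=
            Set.disjoint_left.mpr fun x hx hxS =>
              hpt i j hij x hx.1 (hSj hxS)
          have hXfin : volume (A.piece i ∩ Ic) ≠ ⊤ :=
            ((measure_mono Set.inter_subset_right).trans_lt hIcfin).ne
          rw [show dgInterval l c' = Ic from rfl, he,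
            measure_union hdisj hmeasS, ENNReal.toReal_add hXfin hSfin,
            if_pos rfl, hic]
          ring
        · have he : (A.piece i ∪ S) ∩ dgInterval l c' = A.piece i ∩ dgInterval l c' := by
            have hd := hSdis c' hc'
            ext x
            constructor
            · rintro ⟨hx1 | hx1, hx2⟩
              · exact ⟨hx1, hx2⟩
              · exact (Set.eq_empty_iff_forall_notMem.mp hd x ⟨hx1, hx2⟩).elim
            · rintro ⟨hx1, hx2⟩; exact ⟨Or.inl hx1, hx2⟩
          rw [he, if_neg hc', add_zero]
      unfold valDiv
      rw [Finset.sum_congr rfl fun c' _ => hterm c', Finset.sum_add_distrib]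
      congr 1
      simp
    apply hPO
    refine ⟨A', ?_, ⟨i, ?_⟩⟩
    · intro k
      by_cases hk1 : k = i
      · rw [hk1]
        show util vM vC A i ≤ valInd vM i (A.ind i) + valDiv vC i (P i)
        have h1 : P i = A.piece i ∪ S := by simp [hP]
        rw [h1, hdivi]
        simp only [util, valOn]
        linarith
      · by_cases hk2 : k = j
        · rw [hk2]
          show util vM vC A j ≤ valInd vM j (A.ind j) + valDiv vC j (P j)
          have h1 : P j = A.piece j \ S := by simp [hP, hij.symm]
          rw [h1, hdivj]
          exact le_refl _
        · show util vM vC A k ≤ valInd vM k (A.ind k) + valDiv vC k (P k)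
          have h1 : P k = A.piece k := by simp [hP, hk1, hk2]
          rw [h1]; exact le_refl _
    · show util vM vC A i < valInd vM i (A.ind i) + valDiv vC i (P i)
      have h1 : P i = A.piece i ∪ S := by simp [hP]
      rw [h1, hdivi]
      simp only [util, valOn]
      linarith
end

section
/- Let all agents' valuations be binary and linear, and let Φ : ℝ^N → ℝ be symmetric and strictly convex. Then every Φ-fair allocation A of the mixed goods (not necessarily satisfying condition (*)) satisfies the following weaker variant of EFXM: for all agents i,j, if u_i(C_j) = 0 then u_i(A_i) ≥ u_i(A_j) or u_i(A_i) ≥ u_i(A_j \ {g}) for every indivisible good g ∈ A_j; otherwise u_i(A_i) ≥ u_i(A_j). -/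
open MeasureTheory

/-!
Utilitarian optimality forces every good, and every positive-measure part of an interval
`I_k`, to be held by an agent who values it maximally; in particular `u_i(A_j) ≤ u_j(A_j)`,
and whatever `i` values in `A_j` is valued equally by `j`. Handing such an item of value
`d > 0` from `j` to `i` keeps the allocation utilitarian optimal, and if
`u_i(A_i) + d < u_j(A_j)` it is a Pigou–Dalton transfer, which strictly lowers a symmetric
strictly convex `Φ`. So `u_j(A_j) ≤ u_i(A_i) + d` for every such item. A piece of cake can
be taken of arbitrarily small measure, giving `u_i(A_j) ≤ u_j(A_j) ≤ u_i(A_i)`. A good has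
`d = 1`, and `j` values each of its goods at `1`, so
`u_i(A_j \ {g}) + 1 ≤ u_j(A_j) ≤ u_i(A_i) + 1`.
-/

open Set

section Cake

variable {l : ℕ}

lemma measurableSet_dgInterval (k : Fin l) : MeasurableSet (dgInterval l k) :=
  measurableSet_Ico

lemma disjoint_dgInterval {k k' : Fin l} (h : k ≠ k') :
    Disjoint (dgInterval l k) (dgInterval l k') := by
  have hl : (0 : ℝ) < l := by exact_mod_cast k.pos
  wlog hlt : k < k' generalizing k k'
  · exact (this h.symm (lt_of_le_of_ne (not_lt.mp hlt) h.symm)).symm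
  have hkk' : (k : ℝ) + 1 ≤ k' := by exact_mod_cast Fin.lt_def.mp hlt
  refine Ico_disjoint_Ico.mpr ?_
  simp only [min_le_iff, le_max_iff]
  exact Or.inr (Or.inl (by gcongr))

lemma volume_inter_dgInterval_ne_top (S : Set ℝ) (k : Fin l) :
    volume (S ∩ dgInterval l k) ≠ ⊤ :=
  measure_ne_top_of_subset inter_subset_right (by simp [dgInterval, Real.volume_Ico])

lemma exists_subset_volume_pos_le {P : Set ℝ} (hPm : MeasurableSet P) (hP : volume P ≠ 0)
    {ε : ℝ} (hε : 0 < ε) :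
    ∃ S ⊆ P, MeasurableSet S ∧ 0 < (volume S).toReal ∧ (volume S).toReal ≤ ε := by
  rw [← inter_univ P, ← iUnion_Ico_zsmul hε, inter_iUnion] at hP
  obtain ⟨z, hz⟩ := exists_measure_pos_of_not_measure_iUnion_null hP
  have hle : volume (P ∩ Ico (z • ε) ((z + 1) • ε)) ≤ ENNReal.ofReal ε := by
    refine (measure_mono inter_subset_right).trans_eq ?_
    rw [Real.volume_Ico, add_smul, one_smul, add_sub_cancel_left]
  refine ⟨_, inter_subset_left, hPm.inter measurableSet_Ico,
    ENNReal.toReal_pos hz.ne' (ne_top_of_le_ne_top ENNReal.ofReal_ne_top hle), ?_⟩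
  exact ENNReal.toReal_le_of_le_ofReal hε.le hle

end Cake

section Valuations

variable {n m l : ℕ} {vM : Fin n → Fin m → ℝ} {vC : Fin n → Fin l → ℝ}

lemma valInd_nonneg (hM : ∀ i g, 0 ≤ vM i g) (i : Fin n) (T : Finset (Fin m)) :
    0 ≤ valInd vM i T :=
  Finset.sum_nonneg fun g _ => hM i g

lemma valDiv_nonneg (hC : ∀ i k, 0 ≤ vC i k) (i : Fin n) (S : Set ℝ) :
    0 ≤ valDiv vC i S :=
  Finset.sum_nonneg fun k _ => mul_nonneg (hC i k) ENNReal.toReal_nonneg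

@[simp]
lemma valDiv_empty (i : Fin n) : valDiv vC i ∅ = 0 := by
  simp [valDiv]

lemma valDiv_union (i : Fin n) {X S : Set ℝ} (hd : Disjoint X S) (hS : MeasurableSet S) :
    valDiv vC i (X ∪ S) = valDiv vC i X + valDiv vC i S := by
  simp only [valDiv, ← Finset.sum_add_distrib, ← mul_add]
  refine Finset.sum_congr rfl fun k _ => ?_
  rw [union_inter_distrib_right, measure_union (hd.mono inter_subset_left inter_subset_left)
      (hS.inter (measurableSet_dgInterval k)),
    ENNReal.toReal_add (volume_inter_dgInterval_ne_top _ _) (volume_inter_dgInterval_ne_top _ _)]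

lemma valDiv_diff (i : Fin n) {X S : Set ℝ} (hSX : S ⊆ X) (hS : MeasurableSet S) :
    valDiv vC i (X \ S) = valDiv vC i X - valDiv vC i S := by
  rw [eq_sub_iff_add_eq, ← valDiv_union i disjoint_sdiff_left hS, sdiff_union_of_subset hSX]

lemma valDiv_of_subset_dgInterval (i : Fin n) {S : Set ℝ} {k : Fin l}
    (hS : S ⊆ dgInterval l k) : valDiv vC i S = vC i k * (volume S).toReal := by
  rw [valDiv, Finset.sum_eq_single k, inter_eq_self_of_subset_left hS]
  · intro k' _ hk'
    rw [(disjoint_dgInterval hk'.symm).mono_left hS |>.inter_eq, measure_empty,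
      ENNReal.toReal_zero, mul_zero]
  · simp

end Valuations

namespace Alloc

variable {n m : ℕ}

lemma eq_of_mem_ind (A : Alloc n m) {i j : Fin n} {g : Fin m} (hi : g ∈ A.ind i)
    (hj : g ∈ A.ind j) : i = j :=
  (A.ind_partition g).unique hi hj

lemma disjoint_piece (A : Alloc n m) {i j : Fin n} (h : i ≠ j) :
    Disjoint (A.piece i) (A.piece j) :=
  Set.disjoint_iff_inter_eq_empty.mpr (A.piece_disjoint i j h)

lemma piece_subset_Ico (A : Alloc n m) (i : Fin n) : A.piece i ⊆ Ico 0 1 :=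
  A.piece_cover ▸ subset_iUnion A.piece i

def giveTo (A : Alloc n m) (i : Fin n) (T : Finset (Fin m)) (S : Set ℝ)
    (hSm : MeasurableSet S) (hS : S ⊆ Ico 0 1) : Alloc n m where
  ind k := if k = i then A.ind i ∪ T else A.ind k \ T
  piece k := if k = i then A.piece i ∪ S else A.piece k \ S
  ind_partition g := by
    obtain ⟨o, ho, huniq⟩ := A.ind_partition g
    by_cases hg : g ∈ T
    · refine ⟨i, by simp [hg], fun k hk => ?_⟩
      by_contra hki
      simp [hki, hg] at hk
    · refine ⟨o, ?_, fun k hk => huniq k ?_⟩ <;> dsimp only at *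
      · split_ifs with h
        · simp [← h, ho]
        · simp [ho, hg]
      · split_ifs at hk with h <;> simp_all
  piece_measurable k := by
    split_ifs
    exacts [(A.piece_measurable i).union hSm, (A.piece_measurable k).diff hSm]
  piece_disjoint a b hab := by
    have := fun {a b} (h : a ≠ b) => Set.disjoint_left.mp (A.disjoint_piece h)
    ext x
    split_ifs <;> subst_vars <;>
      simp only [mem_inter_iff, mem_union, mem_sdiff, mem_empty_iff_false, iff_false] <;>
      have := @this _ _ hab x <;> tauto
  piece_cover := by
    refine Subset.antisymm (iUnion_subset fun k => ?_) fun x hx => mem_iUnion.mpr ?_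
    · split_ifs
      exacts [union_subset (A.piece_subset_Ico i) hS, sdiff_subset.trans (A.piece_subset_Ico k)]
    · obtain ⟨k, hk⟩ := mem_iUnion.mp (A.piece_cover ▸ hx)
      by_cases hxS : x ∈ S
      · exact ⟨i, by simp [hxS]⟩
      · refine ⟨k, ?_⟩
        split_ifs with h
        exacts [Or.inl (h ▸ hk), ⟨hk, hxS⟩]

variable {l : ℕ} {vM : Fin n → Fin m → ℝ} {vC : Fin n → Fin l → ℝ}

lemma util_giveTo_self (A : Alloc n m) {i j : Fin n} (hij : i ≠ j) {T : Finset (Fin m)}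
    (hT : T ⊆ A.ind j) {S : Set ℝ} (hSm : MeasurableSet S) (hSs : S ⊆ A.piece j)
    (hS : S ⊆ Ico 0 1) :
    util vM vC (A.giveTo i T S hSm hS) i
      = util vM vC A i + (valInd vM i T + valDiv vC i S) := by
  have hTd : Disjoint (A.ind i) T := Finset.disjoint_right.mpr fun g hg hgi =>
    hij (A.eq_of_mem_ind hgi (hT hg))
  have hSd : Disjoint (A.piece i) S := (A.disjoint_piece hij).mono_right hSs
  simp only [util, valOn, giveTo, if_pos, valInd, Finset.sum_union hTd, valDiv_union i hSd hSm]
  ring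

lemma util_giveTo_of_ne (A : Alloc n m) {i k : Fin n} (hki : k ≠ i) (T : Finset (Fin m))
    {S : Set ℝ} (hSm : MeasurableSet S) (hS : S ⊆ Ico 0 1) :
    util vM vC (A.giveTo i T S hSm hS) k
      = valInd vM k (A.ind k \ T) + valDiv vC k (A.piece k \ S) := by
  simp only [util, valOn, giveTo, if_neg hki]

lemma util_giveTo_source (A : Alloc n m) {i j : Fin n} (hij : i ≠ j) {T : Finset (Fin m)}
    (hT : T ⊆ A.ind j) {S : Set ℝ} (hSm : MeasurableSet S) (hSs : S ⊆ A.piece j)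
    (hS : S ⊆ Ico 0 1) :
    util vM vC (A.giveTo i T S hSm hS) j
      = util vM vC A j - (valInd vM j T + valDiv vC j S) := by
  rw [util_giveTo_of_ne A hij.symm, valInd, Finset.sum_sdiff_eq_sub hT, valDiv_diff j hSs hSm]
  simp only [util, valOn, valInd]
  ring

lemma util_giveTo_of_ne_of_ne (A : Alloc n m) {i j k : Fin n} (hki : k ≠ i) (hkj : k ≠ j)
    {T : Finset (Fin m)} (hT : T ⊆ A.ind j) {S : Set ℝ} (hSm : MeasurableSet S)
    (hSs : S ⊆ A.piece j) (hS : S ⊆ Ico 0 1) :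
    util vM vC (A.giveTo i T S hSm hS) k = util vM vC A k := by
  have hTd : Disjoint (A.ind k) T := Finset.disjoint_right.mpr fun g hg hgk =>
    hkj (A.eq_of_mem_ind hgk (hT hg))
  have hSd : Disjoint (A.piece k) S := (A.disjoint_piece hkj).mono_right hSs
  rw [util_giveTo_of_ne A hki, Finset.sdiff_eq_self_of_disjoint hTd, hSd.sdiff_eq_left]
  rfl

lemma sum_util_giveTo (A : Alloc n m) {i j : Fin n} (hij : i ≠ j) {T : Finset (Fin m)}
    (hT : T ⊆ A.ind j) {S : Set ℝ} (hSm : MeasurableSet S) (hSs : S ⊆ A.piece j)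
    (hS : S ⊆ Ico 0 1) :
    ∑ k, util vM vC (A.giveTo i T S hSm hS) k
      = ∑ k, util vM vC A k + (valInd vM i T + valDiv vC i S)
          - (valInd vM j T + valDiv vC j S) := by
  have hdiff := Fintype.sum_eq_add i j hij
    (f := fun k => util vM vC (A.giveTo i T S hSm hS) k - util vM vC A k) fun k hk =>
      sub_eq_zero.mpr (util_giveTo_of_ne_of_ne A hk.1 hk.2 hT hSm hSs hS)
  rw [Finset.sum_sub_distrib, util_giveTo_self A hij hT hSm hSs,
    util_giveTo_source A hij hT hSm hSs] at hdiff
  linarith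

end Alloc

lemma apply_lt_of_pigouDalton {n : ℕ} {Φ : (Fin n → ℝ) → ℝ}
    (hsym : ∀ (σ : Equiv.Perm (Fin n)) (z : Fin n → ℝ), Φ (z ∘ σ) = Φ z)
    (hconv : ∀ z w : Fin n → ℝ, z ≠ w → ∀ t : ℝ, 0 < t → t < 1 →
      Φ (fun i => t * z i + (1 - t) * w i) < t * Φ z + (1 - t) * Φ w)
    {x z : Fin n → ℝ} {i j : Fin n} (hij : i ≠ j) {d : ℝ} (hd : 0 < d)
    (hgap : x i + d < x j)
    (hzi : z i = x i + d) (hzj : z j = x j - d) (hz : ∀ k, k ≠ i → k ≠ j → z k = x k) :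
    Φ z < Φ x := by
  -- `z` lies strictly between `x` and its transposition `y`, which has the same `Φ`-value
  set y := x ∘ Equiv.swap i j
  have hxji : 0 < x j - x i := by linarith
  set s := d / (x j - x i)
  have hs0 : 0 < s := div_pos hd hxji
  have hs1 : s < 1 := (div_lt_one hxji).mpr (by linarith)
  have hsd : s * (x j - x i) = d := div_mul_cancel₀ d hxji.ne'
  have hxy : x ≠ y := fun h => by
    have := congrFun h i
    simp only [y, Function.comp_apply, Equiv.swap_apply_left] at this
    linarith
  have hz_eq : z = fun k => (1 - s) * x k + (1 - (1 - s)) * y k := by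
    funext k
    by_cases hki : k = i
    · subst hki
      simp only [y, hzi, Function.comp_apply, Equiv.swap_apply_left]
      linarith
    by_cases hkj : k = j
    · subst hkj
      simp only [y, hzj, Function.comp_apply, Equiv.swap_apply_right]
      linarith
    · simp only [y, hz k hki hkj, Function.comp_apply, Equiv.swap_apply_of_ne_of_ne hki hkj]
      ring
  calc Φ z < (1 - s) * Φ x + (1 - (1 - s)) * Φ y :=
        hz_eq ▸ hconv x y hxy (1 - s) (by linarith) (by linarith)
    _ = Φ x := by rw [hsym]; ring

section Fairness

variable {n m l : ℕ} {vM : Fin n → Fin m → ℝ} {vC : Fin n → Fin l → ℝ} {A : Alloc n m}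

lemma UtilOpt.val_le_of_giveTo (hopt : UtilOpt vM vC A) (i : Fin n) {j : Fin n}
    {T : Finset (Fin m)} (hT : T ⊆ A.ind j) {S : Set ℝ} (hSm : MeasurableSet S)
    (hSs : S ⊆ A.piece j) :
    valInd vM i T + valDiv vC i S ≤ valInd vM j T + valDiv vC j S := by
  rcases eq_or_ne i j with rfl | hij
  · rfl
  have := hopt (A.giveTo i T S hSm (hSs.trans (A.piece_subset_Ico j)))
  rw [A.sum_util_giveTo hij hT hSm hSs] at this
  linarith

lemma UtilOpt.le_of_mem_ind (hopt : UtilOpt vM vC A) (i : Fin n) {j : Fin n} {g : Fin m}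
    (hg : g ∈ A.ind j) : vM i g ≤ vM j g := by
  simpa [valInd] using hopt.val_le_of_giveTo i (Finset.singleton_subset_iff.mpr hg)
    MeasurableSet.empty (empty_subset _)

lemma UtilOpt.le_of_volume_ne_zero (hopt : UtilOpt vM vC A) (i : Fin n) {j : Fin n}
    {k : Fin l} (hvol : volume (A.piece j ∩ dgInterval l k) ≠ 0) : vC i k ≤ vC j k := by
  have := hopt.val_le_of_giveTo i (Finset.empty_subset _)
    ((A.piece_measurable j).inter (measurableSet_dgInterval k)) inter_subset_left
  simp only [valInd, Finset.sum_empty, zero_add,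
    valDiv_of_subset_dgInterval _ (inter_subset_right (s := A.piece j))] at this
  exact le_of_mul_le_mul_right this
    (ENNReal.toReal_pos hvol (volume_inter_dgInterval_ne_top _ _))

lemma UtilOpt.valOn_le_util (hopt : UtilOpt vM vC A) (i j : Fin n) :
    valOn vM vC A i j ≤ util vM vC A j := by
  refine add_le_add (Finset.sum_le_sum fun g hg => hopt.le_of_mem_ind i hg)
    (Finset.sum_le_sum fun k _ => ?_)
  rcases eq_or_ne (volume (A.piece j ∩ dgInterval l k)) 0 with h0 | h0
  · simp [h0]
  · exact mul_le_mul_of_nonneg_right (hopt.le_of_volume_ne_zero i h0) ENNReal.toReal_nonneg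

lemma UtilOpt.eq_one_of_mem_ind (hopt : UtilOpt vM vC A)
    (hbinM : ∀ i g, vM i g = 0 ∨ vM i g = 1) (hgoodM : ∀ g : Fin m, ∃ i, 0 < vM i g)
    {j : Fin n} {g : Fin m} (hg : g ∈ A.ind j) : vM j g = 1 := by
  obtain ⟨i, hi⟩ := hgoodM g
  have := hopt.le_of_mem_ind i hg
  rcases hbinM j g with h | h <;> rcases hbinM i g with h' | h' <;> linarith

variable {Φ : (Fin n → ℝ) → ℝ}

lemma PhiFair.util_le_add_of_giveTo (hfair : PhiFair vM vC Φ A)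
    (hsym : ∀ (σ : Equiv.Perm (Fin n)) (z : Fin n → ℝ), Φ (z ∘ σ) = Φ z)
    (hconv : ∀ z w : Fin n → ℝ, z ≠ w → ∀ t : ℝ, 0 < t → t < 1 →
      Φ (fun i => t * z i + (1 - t) * w i) < t * Φ z + (1 - t) * Φ w)
    (i : Fin n) {j : Fin n} {T : Finset (Fin m)} (hT : T ⊆ A.ind j) {S : Set ℝ}
    (hSm : MeasurableSet S) (hSs : S ⊆ A.piece j) {d : ℝ} (hd : 0 < d)
    (hi : valInd vM i T + valDiv vC i S = d)
    (hj : valInd vM j T + valDiv vC j S = d) :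
    util vM vC A j ≤ util vM vC A i + d := by
  rcases eq_or_ne i j with rfl | hij
  · linarith
  have hS := hSs.trans (A.piece_subset_Ico j)
  have hopt' : UtilOpt vM vC (A.giveTo i T S hSm hS) := fun B =>
    (hfair.1 B).trans_eq (by rw [A.sum_util_giveTo hij hT hSm hSs, hi, hj]; ring)
  by_contra! hgap
  refine (hfair.2 _ hopt').not_gt (apply_lt_of_pigouDalton hsym hconv hij hd hgap ?_ ?_ ?_)
  · rw [A.util_giveTo_self hij hT hSm hSs, hi]
  · rw [A.util_giveTo_source hij hT hSm hSs, hj]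
  · exact fun k hki hkj => A.util_giveTo_of_ne_of_ne hki hkj hT hSm hSs hS

lemma PhiFair.valInd_sdiff_singleton_le_util (hfair : PhiFair vM vC Φ A)
    (hsym : ∀ (σ : Equiv.Perm (Fin n)) (z : Fin n → ℝ), Φ (z ∘ σ) = Φ z)
    (hconv : ∀ z w : Fin n → ℝ, z ≠ w → ∀ t : ℝ, 0 < t → t < 1 →
      Φ (fun i => t * z i + (1 - t) * w i) < t * Φ z + (1 - t) * Φ w)
    (hbinM : ∀ i g, vM i g = 0 ∨ vM i g = 1) (hbinC : ∀ i k, vC i k = 0 ∨ vC i k = 1)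
    (hgoodM : ∀ g : Fin m, ∃ i, 0 < vM i g) (i : Fin n) {j : Fin n} {g₀ : Fin m}
    (hg₀ : g₀ ∈ A.ind j) :
    valInd vM i (A.ind j \ {g₀}) ≤ util vM vC A i := by
  have hM : ∀ i g, 0 ≤ vM i g := fun i g => by rcases hbinM i g with h | h <;> simp [h]
  have hC : ∀ i k, 0 ≤ vC i k := fun i k => by rcases hbinC i k with h | h <;> simp [h]
  by_cases hpos : ∃ g ∈ A.ind j \ {g₀}, vM i g = 1
  · obtain ⟨g, hg, hig⟩ := hpos
    have hgj := (Finset.mem_sdiff.mp hg).1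
    have hjg := hfair.1.eq_one_of_mem_ind hbinM hgoodM hgj
    have hgive := hfair.util_le_add_of_giveTo hsym hconv i
      (Finset.singleton_subset_iff.mpr hgj)
      MeasurableSet.empty (empty_subset _) one_pos (by simp [valInd, hig]) (by simp [valInd, hjg])
    have hsplit : valInd vM j (A.ind j \ {g₀}) + vM j g₀ = valInd vM j (A.ind j) := by
      rw [valInd, Finset.sdiff_singleton_eq_erase, Finset.sum_erase_add _ _ hg₀, valInd]
    calc valInd vM i (A.ind j \ {g₀})
        ≤ valInd vM j (A.ind j \ {g₀}) :=
          Finset.sum_le_sum fun g hg => hfair.1.le_of_mem_ind i (Finset.mem_sdiff.mp hg).1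
      _ = valInd vM j (A.ind j) - 1 := by
          rw [← hsplit, hfair.1.eq_one_of_mem_ind hbinM hgoodM hg₀, add_sub_cancel_right]
      _ ≤ util vM vC A j - 1 := by
          gcongr
          exact le_add_of_nonneg_right (valDiv_nonneg hC j _)
      _ ≤ util vM vC A i := by linarith
  · push Not at hpos
    rw [valInd, Finset.sum_eq_zero fun g hg => (hbinM i g).resolve_right (hpos g hg)]
    exact add_nonneg (valInd_nonneg hM i _) (valDiv_nonneg hC i _)

lemma PhiFair.valOn_le_util_of_valDiv_ne_zero (hfair : PhiFair vM vC Φ A)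
    (hsym : ∀ (σ : Equiv.Perm (Fin n)) (z : Fin n → ℝ), Φ (z ∘ σ) = Φ z)
    (hconv : ∀ z w : Fin n → ℝ, z ≠ w → ∀ t : ℝ, 0 < t → t < 1 →
      Φ (fun i => t * z i + (1 - t) * w i) < t * Φ z + (1 - t) * Φ w)
    (hbinC : ∀ i k, vC i k = 0 ∨ vC i k = 1) {i j : Fin n}
    (hdiv : valDiv vC i (A.piece j) ≠ 0) :
    valOn vM vC A i j ≤ util vM vC A i := by
  obtain ⟨k, -, hk⟩ := Finset.exists_ne_zero_of_sum_ne_zero hdiv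
  have hik : vC i k = 1 := (hbinC i k).resolve_left (left_ne_zero_of_mul hk)
  have hvol : volume (A.piece j ∩ dgInterval l k) ≠ 0 := fun h => hk (by simp [h])
  have hjk : vC j k = 1 := by
    have := hfair.1.le_of_volume_ne_zero i hvol
    rcases hbinC j k with h | h <;> linarith
  refine (hfair.1.valOn_le_util i j).trans (le_of_forall_pos_le_add fun ε hε => ?_)
  obtain ⟨S, hSP, hSm, hSpos, hSε⟩ := exists_subset_volume_pos_le
    ((A.piece_measurable j).inter (measurableSet_dgInterval k)) hvol hε
  have hSk : S ⊆ dgInterval l k := hSP.trans inter_subset_right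
  have := hfair.util_le_add_of_giveTo hsym hconv i (Finset.empty_subset _) hSm
    (hSP.trans inter_subset_left) hSpos
    (by simp [valInd, valDiv_of_subset_dgInterval _ hSk, hik])
    (by simp [valInd, valDiv_of_subset_dgInterval _ hSk, hjk])
  linarith

end Fairness

theorem phiFair_is_weak_EFXM_general {n m l : ℕ}
    (vM : Fin n → Fin m → ℝ) (vC : Fin n → Fin l → ℝ)
    (hbinM : ∀ i g, vM i g = 0 ∨ vM i g = 1)
    (hbinC : ∀ i j, vC i j = 0 ∨ vC i j = 1)
    (hgoodM : ∀ g : Fin m, ∃ i, 0 < vM i g)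
    (Φ : (Fin n → ℝ) → ℝ)
    (hsym : ∀ (σ : Equiv.Perm (Fin n)) (z : Fin n → ℝ), Φ (z ∘ σ) = Φ z)
    (hconv : ∀ z w : Fin n → ℝ, z ≠ w → ∀ t : ℝ, 0 < t → t < 1 →
      Φ (fun i => t * z i + (1 - t) * w i) < t * Φ z + (1 - t) * Φ w)
    (A : Alloc n m)
    (hfair : PhiFair vM vC Φ A) :
    ∀ i j : Fin n,
      (valDiv vC i (A.piece j) = 0 →
        (valOn vM vC A i j ≤ util vM vC A i ∨
          ∀ g ∈ A.ind j,
            valInd vM i (A.ind j \ {g}) + valDiv vC i (A.piece j) ≤ util vM vC A i)) ∧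
      (valDiv vC i (A.piece j) ≠ 0 → valOn vM vC A i j ≤ util vM vC A i) := by
  intro i j
  refine ⟨fun hdiv => Or.inr fun g hg => ?_,
    hfair.valOn_le_util_of_valDiv_ne_zero hsym hconv hbinC⟩
  rw [hdiv, add_zero]
  exact hfair.valInd_sdiff_singleton_le_util hsym hconv hbinM hbinC hgoodM i hg

/-- for binary linear valuations and a symmetric strictly convex `Φ`,
every `Φ`-fair allocation (not necessarily satisfying condition (*)) satisfies the
weaker variant of EFXM: for all agents `i, j`, if `u_i(C_j) = 0` then
`u_i(A_i) ≥ u_i(A_j)` or `u_i(A_i) ≥ u_i(A_j \ {g})` for every indivisible good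
`g ∈ A_j`; otherwise `u_i(A_i) ≥ u_i(A_j)`. -/
theorem phiFair_is_weak_EFXM {n m l : ℕ} (hl : 0 < l)
    (vM : Fin n → Fin m → ℝ) (vC : Fin n → Fin l → ℝ)
    (hbinM : ∀ i g, vM i g = 0 ∨ vM i g = 1)
    (hbinC : ∀ i j, vC i j = 0 ∨ vC i j = 1)
    (hagent : ∀ i : Fin n, (∃ g, 0 < vM i g) ∨ ∃ j, 0 < vC i j)
    (hgoodM : ∀ g : Fin m, ∃ i, 0 < vM i g)
    (hgoodC : ∀ j : Fin l, ∃ i, 0 < vC i j)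
    (Φ : (Fin n → ℝ) → ℝ)
    (hsym : ∀ (σ : Equiv.Perm (Fin n)) (z : Fin n → ℝ), Φ (z ∘ σ) = Φ z)
    (hconv : ∀ z w : Fin n → ℝ, z ≠ w → ∀ t : ℝ, 0 < t → t < 1 →
      Φ (fun i => t * z i + (1 - t) * w i) < t * Φ z + (1 - t) * Φ w)
    (A : Alloc n m)
    (hfair : PhiFair vM vC Φ A) :
    ∀ i j : Fin n,
      (valDiv vC i (A.piece j) = 0 →
        (valOn vM vC A i j ≤ util vM vC A i ∨
          ∀ g ∈ A.ind j,
            valInd vM i (A.ind j \ {g}) + valDiv vC i (A.piece j) ≤ util vM vC A i)) ∧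
      (valDiv vC i (A.piece j) ≠ 0 → valOn vM vC A i j ≤ util vM vC A i) :=
  phiFair_is_weak_EFXM_general vM vC hbinM hbinC hgoodM Φ hsym hconv A hfair
end
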